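/- Two interval modules ℚ[a,b) and ℚ[c,d) over (ℝ, ≤) (with a < b, c < d) are δ-interleaved if and only if either max(|a−c|, |b−d|) ≤ δ, or both b − a ≤ 2δ and d − c ≤ 2δ. In particular, d_I(ℚ[a,b), ℚ[c,d)) = min( max(|a−c|, |b−d|), max((b−a)/2, (d−c)/2) ). -/

import Mathlib

open CategoryTheory
open scoped NNReal ENNReal

/-- A `δ`-interleaving between two persistent objects `F G : (ℝ, ≤) ⥤ C`. -/
structure Interleaving {C : Type*} [Category C] (F G : ℝ ⥤ C) (δ : ℝ) where
  φ : ∀ t : ℝ, F.obj t ⟶ G.obj (t + δ)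
  ψ : ∀ t : ℝ, G.obj t ⟶ F.obj (t + δ)
  natφ : ∀ (t s : ℝ) (h : t ≤ s),
    φ t ≫ G.map (homOfLE (add_le_add_left h δ)) = F.map (homOfLE h) ≫ φ s
  natψ : ∀ (t s : ℝ) (h : t ≤ s),
    ψ t ≫ F.map (homOfLE (add_le_add_left h δ)) = G.map (homOfLE h) ≫ ψ s
  triφψ : ∀ (t : ℝ) (h : t ≤ t + δ + δ), φ t ≫ ψ (t + δ) = F.map (homOfLE h)
  triψφ : ∀ (t : ℝ) (h : t ≤ t + δ + δ), ψ t ≫ φ (t + δ) = G.map (homOfLE h)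

/-- The interleaving distance between two persistent objects: the infimum of all
`δ ≥ 0` such that `F` and `G` are `δ`-interleaved (`∞` if no interleaving exists). -/
noncomputable def interleavingDist {C : Type*} [Category C] (F G : ℝ ⥤ C) : ℝ≥0∞ :=
  ⨅ (δ : NNReal) (_ : Nonempty (Interleaving F G (δ : ℝ))), (δ : ℝ≥0∞)


open CategoryTheory CategoryTheory.Limits
open scoped ZeroObject

open scoped Classical in
noncomputable def intervalObj {C : Type*} [Category C] [HasZeroObject C]
    (I : Set ℝ) (M : C) (t : ℝ) : C :=
  if t ∈ I then M else 0

open scoped Classical in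
noncomputable def intervalMap {C : Type*} [Category C] [HasZeroObject C] [HasZeroMorphisms C]
    (I : Set ℝ) (M : C) {t s : ℝ} (h : t ≤ s) :
    intervalObj I M t ⟶ intervalObj I M s :=
  if h' : Set.Icc t s ⊆ I then
    eqToHom (show intervalObj I M t = intervalObj I M s by
      simp [intervalObj, h' (Set.left_mem_Icc.mpr h), h' (Set.right_mem_Icc.mpr h)])
  else 0

/-- The interval-like persistent object `M[I]` as an honest functor `(ℝ,≤) ⥤ C`,
for an interval (order-connected set) `I`. -/
noncomputable def intervalFunctor {C : Type*} [Category C] [HasZeroObject C]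
    [HasZeroMorphisms C] (I : Set ℝ) (hI : I.OrdConnected) (M : C) : ℝ ⥤ C where
  obj := intervalObj I M
  map := fun {t s} f => intervalMap I M (leOfHom f)
  map_id := by
    intro t
    by_cases h' : Set.Icc t t ⊆ I
    · simp only [intervalMap]; rw [dif_pos h']; simp
    · have ht : t ∉ I := fun ht => h' (by simpa [Set.Icc_self] using Set.singleton_subset_iff.mpr ht)
      have hz : IsZero (intervalObj I M t) := by
        simp only [intervalObj, if_neg ht]; exact isZero_zero C
      exact hz.eq_of_src _ _
  map_comp := by
    intro t s r f g
    have h₁ := leOfHom f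
    have h₂ := leOfHom g
    by_cases hts : Set.Icc t s ⊆ I
    · by_cases hsr : Set.Icc s r ⊆ I
      · have htr : Set.Icc t r ⊆ I :=
          hI.out (hts (Set.left_mem_Icc.mpr h₁)) (hsr (Set.right_mem_Icc.mpr h₂))
        simp [intervalMap, hts, hsr, htr]
      · have htr : ¬ Set.Icc t r ⊆ I := fun htr =>
          hsr fun x hx => htr ⟨h₁.trans hx.1, hx.2⟩
        simp [intervalMap, hts, hsr, htr]
    · have htr : ¬ Set.Icc t r ⊆ I := fun htr =>
        hts fun x hx => htr ⟨hx.1, hx.2.trans h₂⟩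
      simp [intervalMap, hts, htr]

section AuxLemmas

open CategoryTheory CategoryTheory.Limits
open scoped Classical

variable {C : Type*} [Category C] [HasZeroObject C] [HasZeroMorphisms C]

/-- Swap the two sides of an interleaving. -/
def Interleaving.symm {F G : ℝ ⥤ C} {δ : ℝ} (E : Interleaving F G δ) :
    Interleaving G F δ :=
  ⟨E.ψ, E.φ, E.natψ, E.natφ, E.triψφ, E.triφψ⟩

lemma intervalObj_eq_of_mem {I : Set ℝ} (M : C) {t : ℝ} (h : t ∈ I) :
    intervalObj I M t = M := if_pos h

lemma isZero_intervalObj_of_not_mem {I : Set ℝ} (M : C) {t : ℝ} (h : t ∉ I) :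
    IsZero (intervalObj I M t) := by
  rw [intervalObj, if_neg h]; exact isZero_zero C

lemma mem_of_not_isZero {I : Set ℝ} {M : C} {t : ℝ}
    (h : ¬ IsZero (intervalObj I M t)) : t ∈ I := by
  by_contra hm; exact h (isZero_intervalObj_of_not_mem M hm)

lemma intervalMap_eq_of_subset {I : Set ℝ} (M : C) {t s : ℝ} (h : t ≤ s)
    (hsub : Set.Icc t s ⊆ I) :
    intervalMap I M h = eqToHom (by
      simp [intervalObj, hsub (Set.left_mem_Icc.mpr h), hsub (Set.right_mem_Icc.mpr h)]) := by
  rw [intervalMap, dif_pos hsub]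

lemma intervalMap_eq_zero {I : Set ℝ} (M : C) {t s : ℝ} (h : t ≤ s)
    (hsub : ¬ Set.Icc t s ⊆ I) : intervalMap I M h = 0 := by
  rw [intervalMap, dif_neg hsub]

lemma intervalMap_ne_zero {I : Set ℝ} {M : C} (hM : ¬ IsZero M) {t s : ℝ} (h : t ≤ s)
    (hsub : Set.Icc t s ⊆ I) : intervalMap I M h ≠ 0 := by
  intro h0
  apply hM
  have hIso : IsIso (intervalMap I M h) := by
    rw [intervalMap_eq_of_subset M h hsub]; infer_instance
  have h1 : 𝟙 (intervalObj I M s) = 0 := by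
    rw [← IsIso.inv_hom_id (intervalMap I M h)]
    simp only [h0, comp_zero]
  have h2 : IsZero (intervalObj I M s) := (IsZero.iff_id_eq_zero _).mpr h1
  rwa [intervalObj_eq_of_mem M (hsub (Set.right_mem_Icc.mpr h))] at h2

/-- The canonical "diagonal" morphism between two interval objects. -/
noncomputable def crossHom (I J : Set ℝ) (M : C) (t s : ℝ) :
    intervalObj I M t ⟶ intervalObj J M s :=
  if h : t ∈ I ∧ s ∈ J then
    eqToHom (by rw [intervalObj_eq_of_mem M h.1, intervalObj_eq_of_mem M h.2])
  else 0

lemma crossHom_eq_of_mem (I J : Set ℝ) (M : C) {t s : ℝ} (ht : t ∈ I) (hs : s ∈ J) :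
    crossHom I J M t s =
      eqToHom (by rw [intervalObj_eq_of_mem M ht, intervalObj_eq_of_mem M hs]) := by
  rw [crossHom, dif_pos ⟨ht, hs⟩]

lemma nat_aux (M : C) (a b c d δ : ℝ) (hδ : 0 ≤ δ) (h1 : c ≤ a + δ) (h2 : d ≤ b + δ)
    (t s : ℝ) (h : t ≤ s) :
    crossHom (Set.Ico a b) (Set.Ico c d) M t (t + δ) ≫
        intervalMap (Set.Ico c d) M (add_le_add_left h δ) =
      intervalMap (Set.Ico a b) M h ≫ crossHom (Set.Ico a b) (Set.Ico c d) M s (s + δ) := by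
  by_cases ht : t ∈ Set.Ico a b
  · by_cases hs : s + δ ∈ Set.Ico c d
    · have htδ : t + δ ∈ Set.Ico c d := ⟨by linarith [ht.1], by linarith [hs.2]⟩
      have hsm : s ∈ Set.Ico a b := ⟨le_trans ht.1 h, by linarith [hs.2]⟩
      have hsub1 : Set.Icc t s ⊆ Set.Ico a b := Set.ordConnected_Ico.out ht hsm
      have hsub2 : Set.Icc (t + δ) (s + δ) ⊆ Set.Ico c d := Set.ordConnected_Ico.out htδ hs
      rw [crossHom_eq_of_mem _ _ _ ht htδ, crossHom_eq_of_mem _ _ _ hsm hs,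
        intervalMap_eq_of_subset _ _ hsub1, intervalMap_eq_of_subset _ _ hsub2]
      simp
    · exact (isZero_intervalObj_of_not_mem M hs).eq_of_tgt _ _
  · exact (isZero_intervalObj_of_not_mem M ht).eq_of_src _ _

lemma tri_aux (M : C) (a b c d δ : ℝ) (hδ : 0 ≤ δ) (h1 : c ≤ a + δ) (h2 : b ≤ d + δ)
    (t : ℝ) (h : t ≤ t + δ + δ) :
    crossHom (Set.Ico a b) (Set.Ico c d) M t (t + δ) ≫
        crossHom (Set.Ico c d) (Set.Ico a b) M (t + δ) (t + δ + δ) =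
      intervalMap (Set.Ico a b) M h := by
  by_cases ht : t ∈ Set.Ico a b
  · by_cases ht2 : t + δ + δ ∈ Set.Ico a b
    · have htδ : t + δ ∈ Set.Ico c d := ⟨by linarith [ht.1], by linarith [ht2.2]⟩
      have hsub : Set.Icc t (t + δ + δ) ⊆ Set.Ico a b := Set.ordConnected_Ico.out ht ht2
      rw [crossHom_eq_of_mem _ _ _ ht htδ, crossHom_eq_of_mem _ _ _ htδ ht2,
        intervalMap_eq_of_subset _ _ hsub]
      simp
    · exact (isZero_intervalObj_of_not_mem M ht2).eq_of_tgt _ _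
  · exact (isZero_intervalObj_of_not_mem M ht).eq_of_src _ _

lemma shortMap_zero (M : C) (a b δ : ℝ) (hba : b - a ≤ 2 * δ) (t : ℝ) (h : t ≤ t + δ + δ) :
    intervalMap (Set.Ico a b) M h = 0 := by
  apply intervalMap_eq_zero
  intro hsub
  have h1 := hsub (Set.left_mem_Icc.mpr h)
  have h2 := hsub (Set.right_mem_Icc.mpr h)
  have := h1.1
  have := h2.2
  linarith

lemma rev_aux {M : C} (hM : ¬ IsZero M) {a b c d δ : ℝ} (hδ : 0 ≤ δ) (hab : a < b)
    (hcd : c < d) (hlong : 2 * δ < b - a)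
    (E : Interleaving (intervalFunctor (Set.Ico a b) Set.ordConnected_Ico M)
        (intervalFunctor (Set.Ico c d) Set.ordConnected_Ico M) δ) :
    |a - c| ≤ δ ∧ |b - d| ≤ δ := by
  have h_mem : ∀ t : ℝ, a ≤ t → t + δ + δ < b → t + δ ∈ Set.Ico c d := by
    intro t ha hb
    have h : t ≤ t + δ + δ := by linarith
    have htri := E.triφψ t h
    apply mem_of_not_isZero (I := Set.Ico c d) (M := M)
    intro hz
    have hφ : E.φ t = 0 := hz.eq_of_tgt _ 0
    rw [hφ, zero_comp] at htri
    have hsub : Set.Icc t (t + δ + δ) ⊆ Set.Ico a b := fun x hx =>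
      ⟨le_trans ha hx.1, lt_of_le_of_lt hx.2 hb⟩
    exact intervalMap_ne_zero hM (leOfHom (homOfLE h)) hsub htri.symm
  have h1 : a + δ ∈ Set.Ico c d := h_mem a le_rfl (by linarith)
  have hca : c ≤ a + δ := h1.1
  have had : a + δ < d := h1.2
  have hbd : b ≤ d + δ := by
    by_contra hcon
    push_neg at hcon
    have h2 := (h_mem (d - δ) (by linarith) (by linarith)).2
    linarith
  have hac : a ≤ c + δ := by
    by_contra hcon
    push_neg at hcon
    have hψc : E.ψ c = 0 :=
      (isZero_intervalObj_of_not_mem M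
        (show c + δ ∉ Set.Ico a b from fun hx => by linarith [hx.1])).eq_of_tgt _ 0
    have hle : c ≤ a - δ := by linarith
    have hnat := E.natψ c (a - δ) hle
    rw [hψc, zero_comp] at hnat
    have hsub1 : Set.Icc c (a - δ) ⊆ Set.Ico c d := fun x hx =>
      ⟨hx.1, by have := hx.2; linarith⟩
    have hGmap : (intervalFunctor (Set.Ico c d) Set.ordConnected_Ico M).map (homOfLE hle) =
        eqToHom (by
          rw [show (intervalFunctor (Set.Ico c d) Set.ordConnected_Ico M).obj c =
            intervalObj (Set.Ico c d) M c from rfl,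
            intervalObj_eq_of_mem M (hsub1 (Set.left_mem_Icc.mpr hle)),
            show (intervalFunctor (Set.Ico c d) Set.ordConnected_Ico M).obj (a - δ) =
            intervalObj (Set.Ico c d) M (a - δ) from rfl,
            intervalObj_eq_of_mem M (hsub1 (Set.right_mem_Icc.mpr hle))]) :=
      intervalMap_eq_of_subset M (leOfHom (homOfLE hle)) hsub1
    rw [hGmap] at hnat
    have hψa : E.ψ (a - δ) = 0 := zero_of_epi_comp _ hnat.symm
    have htri := E.triψφ (a - δ) (by linarith)
    rw [hψa, zero_comp] at htri
    have hsub2 : Set.Icc (a - δ) (a - δ + δ + δ) ⊆ Set.Ico c d := fun x hx =>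
      ⟨by linarith [hx.1], by have := hx.2; linarith⟩
    exact intervalMap_ne_zero hM (leOfHom (homOfLE (show a - δ ≤ a - δ + δ + δ by linarith)))
      hsub2 htri.symm
  have hdb : d ≤ b + δ := by
    by_contra hcon
    push_neg at hcon
    have hψb : E.ψ (b - δ) = 0 :=
      (isZero_intervalObj_of_not_mem M
        (show b - δ + δ ∉ Set.Ico a b from fun hx => by linarith [hx.2])).eq_of_tgt _ 0
    have htri := E.triψφ (b - δ) (by linarith)
    rw [hψb, zero_comp] at htri
    have hsub : Set.Icc (b - δ) (b - δ + δ + δ) ⊆ Set.Ico c d := fun x hx =>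
      ⟨by linarith [hx.1], by have := hx.2; linarith⟩
    exact intervalMap_ne_zero hM (leOfHom (homOfLE (show b - δ ≤ b - δ + δ + δ by linarith)))
      hsub htri.symm
  constructor
  · rw [abs_sub_le_iff]; exact ⟨by linarith, by linarith⟩
  · rw [abs_sub_le_iff]; exact ⟨by linarith, by linarith⟩

lemma not_isZero_QQ : ¬ IsZero (ModuleCat.of ℚ ℚ) := by
  intro h
  have h1 : (𝟙 (ModuleCat.of ℚ ℚ)) = 0 := h.eq_of_src _ _
  have h2 : (1 : ℚ) = 0 := by
    calc (1 : ℚ) = (𝟙 (ModuleCat.of ℚ ℚ)) (1 : ℚ) := rfl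
      _ = (0 : ModuleCat.of ℚ ℚ ⟶ ModuleCat.of ℚ ℚ) (1 : ℚ) := by rw [h1]
      _ = 0 := rfl
  exact one_ne_zero h2

end AuxLemmas

/-- Interval modules `ℚ[a,b)` and `ℚ[c,d)` (with `a < b`, `c < d`) are `δ`-interleaved
iff `max (|a−c|) (|b−d|) ≤ δ` or both `b − a ≤ 2δ` and `d − c ≤ 2δ`; consequently
`d_I(ℚ[a,b), ℚ[c,d)) = min (max |a−c| |b−d|) (max ((b−a)/2) ((d−c)/2))`. -/
theorem interval_module_interleaving (a b c d : ℝ) (hab : a < b) (hcd : c < d) :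
    (∀ δ : ℝ, 0 ≤ δ →
      (Nonempty (Interleaving
          (intervalFunctor (Set.Ico a b) Set.ordConnected_Ico (ModuleCat.of ℚ ℚ))
          (intervalFunctor (Set.Ico c d) Set.ordConnected_Ico (ModuleCat.of ℚ ℚ)) δ) ↔
        (max |a - c| |b - d| ≤ δ ∨ (b - a ≤ 2 * δ ∧ d - c ≤ 2 * δ)))) ∧
    interleavingDist
        (intervalFunctor (Set.Ico a b) Set.ordConnected_Ico (ModuleCat.of ℚ ℚ))
        (intervalFunctor (Set.Ico c d) Set.ordConnected_Ico (ModuleCat.of ℚ ℚ)) =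
      ENNReal.ofReal (min (max |a - c| |b - d|) (max ((b - a) / 2) ((d - c) / 2))) := by
  set M : ModuleCat ℚ := ModuleCat.of ℚ ℚ with hM
  have hpart1 : ∀ δ : ℝ, 0 ≤ δ →
      (Nonempty (Interleaving
          (intervalFunctor (Set.Ico a b) Set.ordConnected_Ico M)
          (intervalFunctor (Set.Ico c d) Set.ordConnected_Ico M) δ) ↔
        (max |a - c| |b - d| ≤ δ ∨ (b - a ≤ 2 * δ ∧ d - c ≤ 2 * δ))) := by
    intro δ hδ
    constructor
    · rintro ⟨E⟩
      by_cases hshort : b - a ≤ 2 * δ ∧ d - c ≤ 2 * δ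
      · exact Or.inr hshort
      · left
        rw [not_and_or, not_le, not_le] at hshort
        rcases hshort with h | h
        · obtain ⟨h1, h2⟩ := rev_aux not_isZero_QQ hδ hab hcd (by linarith) E
          exact max_le h1 h2
        · obtain ⟨h1, h2⟩ := rev_aux not_isZero_QQ hδ hcd hab (by linarith) E.symm
          rw [abs_sub_comm a c, abs_sub_comm b d]
          exact max_le h1 h2
    · rintro (hmax | ⟨h1, h2⟩)
      · rw [max_le_iff, abs_sub_le_iff, abs_sub_le_iff] at hmax
        obtain ⟨⟨hac, hca⟩, hbd, hdb⟩ := hmax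
        exact ⟨⟨fun t => crossHom (Set.Ico a b) (Set.Ico c d) M t (t + δ),
          fun t => crossHom (Set.Ico c d) (Set.Ico a b) M t (t + δ),
          fun t s h => nat_aux M a b c d δ hδ (by linarith) (by linarith) t s h,
          fun t s h => nat_aux M c d a b δ hδ (by linarith) (by linarith) t s h,
          fun t h => tri_aux M a b c d δ hδ (by linarith) (by linarith) t h,
          fun t h => tri_aux M c d a b δ hδ (by linarith) (by linarith) t h⟩⟩
      · exact ⟨⟨fun _ => 0, fun _ => 0,
          fun t s h => by rw [zero_comp, comp_zero],
          fun t s h => by rw [zero_comp, comp_zero],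
          fun t h => by rw [zero_comp]; exact (shortMap_zero M a b δ h1 t h).symm,
          fun t h => by rw [zero_comp]; exact (shortMap_zero M c d δ h2 t h).symm⟩⟩
  refine ⟨hpart1, ?_⟩
  set D := min (max |a - c| |b - d|) (max ((b - a) / 2) ((d - c) / 2)) with hDdef
  have hD0 : 0 ≤ D :=
    le_min (le_trans (abs_nonneg (a - c)) (le_max_left _ _))
      (le_trans (by linarith : (0 : ℝ) ≤ (b - a) / 2) (le_max_left _ _))
  have hkey : ∀ δ : ℝ, 0 ≤ δ →
      (Nonempty (Interleaving
          (intervalFunctor (Set.Ico a b) Set.ordConnected_Ico M)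
          (intervalFunctor (Set.Ico c d) Set.ordConnected_Ico M) δ) ↔ D ≤ δ) := by
    intro δ hδ
    rw [hpart1 δ hδ, hDdef, min_le_iff, max_le_iff (a := (b - a) / 2)]
    constructor
    · rintro (h | ⟨u, v⟩)
      · exact Or.inl h
      · exact Or.inr ⟨by linarith, by linarith⟩
    · rintro (h | ⟨u, v⟩)
      · exact Or.inl h
      · exact Or.inr ⟨by linarith, by linarith⟩
  rw [interleavingDist]
  apply le_antisymm
  · have hmem : Nonempty (Interleaving
        (intervalFunctor (Set.Ico a b) Set.ordConnected_Ico M)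
        (intervalFunctor (Set.Ico c d) Set.ordConnected_Ico M) ((D.toNNReal : ℝ))) := by
      rw [hkey _ D.toNNReal.coe_nonneg, Real.coe_toNNReal D hD0]
    refine le_trans (iInf₂_le D.toNNReal hmem) ?_
    rw [ENNReal.ofReal]
  · refine le_iInf fun δ => le_iInf fun hne => ?_
    have hDδ : D ≤ (δ : ℝ) := (hkey δ δ.coe_nonneg).mp hne
    calc ENNReal.ofReal D ≤ ENNReal.ofReal (δ : ℝ) := ENNReal.ofReal_le_ofReal hDδ
      _ = (δ : ℝ≥0∞) := ENNReal.ofReal_coe_nnreal
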